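/- There is an absolute constant C > 0 such that: for all c, D > 0, all α ∈ (0,1], and every finite Borel measure G on [0,∞), Σ_{l=0}^∞ (2l+1)^{1+2α}·C_l ≤ C·∫_{[0,∞)} e^{μ²/4} G(dμ). In particular, if ∫_{[0,∞)} e^{μ²/4} G(dμ) < ∞ then Σ_{l=0}^∞ (2l+1)^{1+2α}·C_l < ∞. -/

import Mathlib

/-!
Each term of the Bessel series satisfies `|t_n| ≤ (x/2)^ν / Γ(ν+1) · ((x/2)^n / n!)²`,
because `n! Γ(ν+1) ≤ Γ(n+ν+1)`; since `∑ (y^n/n!)² ≤ e^{2y}`, this gives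
`|J_ν(x)| ≤ (x/2)^ν e^x / Γ(ν+1)`. For `ν = l + 1/2` and `Γ(l+3/2) ≥ l!/2` it follows that
`J_ν(μ)²/μ ≤ 2 e^{2μ} ((μ/2)^l / l!)²`. With `(2l+1)^{1+2α} ≤ (2l+1)³ ≤ 27·4^l` the weighted
sum over `l` of the integrands is at most
`108π² e^{2μ} ∑ (μ^l/l!)² ≤ 108π² e^{4μ} ≤ 108π² e^{16} e^{μ²/4}`, as `4μ ≤ 16 + μ²/4`.
Integrating against `G` needs only `∑ ∫ ≤ ∫ ∑`, which holds without any measurability.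
-/

open MeasureTheory Real Set

/-- Bessel function of the first kind of real order `ν`, via its power series
(with real powers; for `ν > 0` this gives `besselJ ν 0 = 0`). -/
noncomputable def besselJ (ν x : ℝ) : ℝ :=
  ∑' n : ℕ, ((-1 : ℝ) ^ n / (n.factorial * Real.Gamma ((n : ℝ) + ν + 1))) *
    (x / 2) ^ (2 * (n : ℝ) + ν)

/-- The integrand `J_{l+1/2}(μ)² / μ`, with its value at `μ = 0` defined by
continuous extension (`2/π` for `l = 0`, `0` for `l ≥ 1`). -/
noncomputable def besselInt (l : ℕ) (μ : ℝ) : ℝ :=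
  if μ = 0 then (if l = 0 then 2 / Real.pi else 0)
  else besselJ ((l : ℝ) + 1 / 2) μ ^ 2 / μ

/-- Angular power spectrum `C_l = C_l(0,0) = 2π² ∫ J_{l+1/2}(μ)²/μ G(dμ)` of the
initial random condition. -/
noncomputable def Cl0 (G : MeasureTheory.Measure ℝ) (l : ℕ) : ℝ :=
  2 * Real.pi ^ 2 * ∫ μ in Set.Ici (0 : ℝ), besselInt l μ ∂G

open scoped Nat

theorem two_mul_add_one_pow_three_le : ∀ l : ℕ, (2 * l + 1) ^ 3 ≤ 27 * 4 ^ l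
  | 0 | 1 | 2 => by norm_num
  | l + 3 => by
    have ih := two_mul_add_one_pow_three_le (l + 2)
    have step : (2 * (l + 3) + 1) ^ 3 ≤ 4 * (2 * (l + 2) + 1) ^ 3 := by ring_nf; nlinarith
    calc (2 * (l + 3) + 1) ^ 3 ≤ 4 * (27 * 4 ^ (l + 2)) := step.trans (by omega)
      _ = 27 * 4 ^ (l + 3) := by ring

namespace Real

theorem factorial_mul_Gamma_le_Gamma_nat_add {s : ℝ} (hs : 1 ≤ s) (n : ℕ) :
    n ! * Gamma s ≤ Gamma (n + s) := by
  induction n with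
  | zero => simp
  | succ n ih =>
    have hn : 0 < (n : ℝ) + s := by positivity
    rw [Nat.factorial_succ, Nat.cast_mul, Nat.cast_succ, add_right_comm, Gamma_add_one hn.ne',
      mul_assoc]
    gcongr

theorem factorial_div_two_le_Gamma_nat_add_three_div_two (l : ℕ) :
    (l ! : ℝ) / 2 ≤ Gamma (l + 3 / 2) := by
  have hGamma : (1 : ℝ) / 2 ≤ Gamma (3 / 2) := by
    rw [show (3 / 2 : ℝ) = 1 / 2 + 1 by norm_num, Gamma_add_one (by norm_num), Gamma_one_half_eq]
    linarith [one_le_sqrt.mpr (by linarith [pi_gt_three] : 1 ≤ π)]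
  calc (l ! : ℝ) / 2 = l ! * (1 / 2) := by ring
    _ ≤ l ! * Gamma (3 / 2) := by gcongr
    _ ≤ Gamma (l + 3 / 2) := factorial_mul_Gamma_le_Gamma_nat_add (by norm_num) l

theorem summable_sq_pow_div_factorial (x : ℝ) : Summable fun n : ℕ ↦ (x ^ n / n !) ^ 2 := by
  refine (summable_pow_div_factorial (x ^ 2)).of_nonneg_of_le (fun n ↦ by positivity) fun n ↦ ?_
  rw [div_pow, ← pow_mul, mul_comm n, pow_mul]
  gcongr
  exact_mod_cast Nat.le_self_pow two_ne_zero _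

theorem tsum_sq_pow_div_factorial_le {x : ℝ} (hx : 0 ≤ x) :
    ∑' n : ℕ, (x ^ n / n !) ^ 2 ≤ exp (2 * x) := by
  calc ∑' n : ℕ, (x ^ n / n !) ^ 2 ≤ ∑' n : ℕ, exp x * (x ^ n / n !) := by
        refine (summable_sq_pow_div_factorial x).tsum_le_tsum (fun n ↦ ?_)
          ((summable_pow_div_factorial x).mul_left _)
        rw [sq]
        exact mul_le_mul_of_nonneg_right (pow_div_factorial_le_exp x hx n) (by positivity)
    _ = exp (2 * x) := by
        rw [tsum_mul_left, ← congrFun NormedSpace.exp_eq_tsum_div x, ← exp_eq_exp_ℝ, ← exp_add,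
          two_mul]

end Real

theorem MeasureTheory.ofReal_integral_le_lintegral_ofReal {X : Type*} [MeasurableSpace X]
    {ρ : Measure X} (f : X → ℝ) :
    ENNReal.ofReal (∫ x, f x ∂ρ) ≤ ∫⁻ x, ENNReal.ofReal (f x) ∂ρ := by
  by_cases hf : Integrable f ρ
  · rw [integral_eq_lintegral_pos_part_sub_lintegral_neg_part hf]
    exact (ENNReal.ofReal_le_ofReal (sub_le_self _ ENNReal.toReal_nonneg)).trans
      ENNReal.ofReal_toReal_le
  · simp [integral_undef hf]

theorem MeasureTheory.tsum_lintegral_le_lintegral_tsum {X ι : Type*} [MeasurableSpace X]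
    {ρ : Measure X} (f : ι → X → ENNReal) :
    ∑' i, ∫⁻ x, f i x ∂ρ ≤ ∫⁻ x, ∑' i, f i x ∂ρ := by
  classical
  have hfinite (s : Finset ι) : ∑ i ∈ s, ∫⁻ x, f i x ∂ρ ≤ ∫⁻ x, ∑ i ∈ s, f i x ∂ρ := by
    induction s using Finset.induction_on with
    | empty => simp
    | insert i s hi ih =>
      simp only [Finset.sum_insert hi]
      exact (add_le_add le_rfl ih).trans (le_lintegral_add _ _)
  rw [ENNReal.tsum_eq_iSup_sum]
  exact iSup_le fun s ↦ (hfinite s).trans (lintegral_mono fun x ↦ ENNReal.sum_le_tsum s)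

theorem abs_besselJ_term_le {ν y : ℝ} (hν : 0 ≤ ν) (hy : 0 < y) (n : ℕ) :
    |(-1 : ℝ) ^ n / (n ! * Gamma ((n : ℝ) + ν + 1)) * y ^ (2 * (n : ℝ) + ν)|
      ≤ y ^ ν / Gamma (ν + 1) * (y ^ n / n !) ^ 2 := by
  have hGamma : n ! * Gamma (ν + 1) ≤ Gamma ((n : ℝ) + ν + 1) := by
    rw [add_assoc]
    exact factorial_mul_Gamma_le_Gamma_nat_add (by linarith) n
  have hGamma_pos : 0 < Gamma (ν + 1) := Gamma_pos_of_pos (by linarith)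
  rw [abs_mul, abs_div, abs_pow, abs_neg, abs_one, one_pow, abs_of_pos (by positivity),
    abs_of_pos (by positivity), rpow_add hy, mul_comm 2, rpow_mul hy.le, rpow_natCast,
    rpow_two, ← pow_mul, mul_comm n 2, pow_mul]
  calc 1 / (n ! * Gamma (n + ν + 1)) * ((y ^ 2) ^ n * y ^ ν)
      ≤ 1 / (n ! * (n ! * Gamma (ν + 1))) * ((y ^ 2) ^ n * y ^ ν) := by gcongr
    _ = y ^ ν / Gamma (ν + 1) * (y ^ n / n !) ^ 2 := by
      rw [← pow_mul, mul_comm 2 n, pow_mul]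
      field_simp

theorem abs_besselJ_le {ν x : ℝ} (hν : 0 ≤ ν) (hx : 0 < x) :
    |besselJ ν x| ≤ (x / 2) ^ ν * exp x / Gamma (ν + 1) := by
  have hy : 0 < x / 2 := by positivity
  have hsum := ((summable_sq_pow_div_factorial (x / 2)).mul_left
    ((x / 2) ^ ν / Gamma (ν + 1))).hasSum
  calc |besselJ ν x| ≤ ∑' n : ℕ, (x / 2) ^ ν / Gamma (ν + 1) * ((x / 2) ^ n / n !) ^ 2 :=
        tsum_of_norm_bounded hsum fun n ↦ (norm_eq_abs _).trans_le (abs_besselJ_term_le hν hy n)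
    _ ≤ (x / 2) ^ ν / Gamma (ν + 1) * exp (2 * (x / 2)) := by
        rw [tsum_mul_left]
        have := Gamma_pos_of_pos (show 0 < ν + 1 by linarith)
        gcongr
        exact tsum_sq_pow_div_factorial_le hy.le
    _ = (x / 2) ^ ν * exp x / Gamma (ν + 1) := by
        rw [mul_div_cancel₀ x two_ne_zero]
        ring

theorem besselInt_le (l : ℕ) {μ : ℝ} (hμ : 0 ≤ μ) :
    besselInt l μ ≤ 2 * exp (2 * μ) * ((μ / 2) ^ l / l !) ^ 2 := by
  rcases hμ.eq_or_lt with rfl | hμ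
  · rcases l with _ | l
    · simpa [besselInt] using div_le_self zero_le_two (by linarith [pi_gt_three])
    · simp [besselInt]
  set ν : ℝ := l + 1 / 2
  have hy : 0 < μ / 2 := by positivity
  have hΓ : (l ! : ℝ) / 2 ≤ Gamma (ν + 1) := by
    rw [show ν + 1 = l + 3 / 2 by ring]
    exact factorial_div_two_le_Gamma_nat_add_three_div_two l
  have hsq : ((μ / 2) ^ ν) ^ 2 = ((μ / 2) ^ l) ^ 2 * (μ / 2) := by
    rw [rpow_add hy, rpow_natCast, mul_pow, ← sqrt_eq_rpow, sq_sqrt hy.le]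
  rw [besselInt, if_neg hμ.ne']
  calc besselJ ν μ ^ 2 / μ ≤ ((μ / 2) ^ ν * exp μ / Gamma (ν + 1)) ^ 2 / μ := by
        rw [← sq_abs]
        gcongr
        exact abs_besselJ_le (by positivity) hμ
    _ = ((μ / 2) ^ l) ^ 2 * exp (2 * μ) / (2 * Gamma (ν + 1) ^ 2) := by
        rw [div_pow, mul_pow, hsq, ← exp_nat_mul, Nat.cast_ofNat]
        field_simp
    _ ≤ ((μ / 2) ^ l) ^ 2 * exp (2 * μ) / (2 * (l ! / 2) ^ 2) := by gcongr
    _ = 2 * exp (2 * μ) * ((μ / 2) ^ l / l !) ^ 2 := by field_simp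

theorem rpow_mul_besselInt_le {α : ℝ} (hα : α ≤ 1) (l : ℕ) {μ : ℝ} (hμ : 0 ≤ μ) :
    (2 * (l : ℝ) + 1) ^ (1 + 2 * α) * (2 * π ^ 2 * besselInt l μ)
      ≤ 108 * π ^ 2 * exp (2 * μ) * (μ ^ l / l !) ^ 2 := by
  have hweight : (2 * (l : ℝ) + 1) ^ (1 + 2 * α) ≤ 27 * 4 ^ l :=
    calc (2 * (l : ℝ) + 1) ^ (1 + 2 * α) ≤ (2 * (l : ℝ) + 1) ^ (3 : ℝ) :=
          rpow_le_rpow_of_exponent_le (by linarith [l.cast_nonneg (α := ℝ)]) (by linarith)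
      _ ≤ 27 * 4 ^ l := by
          rw [rpow_ofNat]
          exact_mod_cast two_mul_add_one_pow_three_le l
  calc (2 * (l : ℝ) + 1) ^ (1 + 2 * α) * (2 * π ^ 2 * besselInt l μ)
      ≤ (2 * (l : ℝ) + 1) ^ (1 + 2 * α) *
          (2 * π ^ 2 * (2 * exp (2 * μ) * ((μ / 2) ^ l / l !) ^ 2)) := by
        gcongr
        exact besselInt_le l hμ
    _ ≤ 27 * 4 ^ l * (2 * π ^ 2 * (2 * exp (2 * μ) * ((μ / 2) ^ l / l !) ^ 2)) := by gcongr
    _ = 108 * π ^ 2 * exp (2 * μ) * (μ ^ l / l !) ^ 2 := by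
        rw [div_pow μ, div_pow, div_pow, ← pow_mul, ← pow_mul, show (4 : ℝ) = 2 ^ 2 by norm_num,
          ← pow_mul]
        field_simp
        ring

theorem tsum_ofReal_rpow_mul_besselInt_le {α : ℝ} (hα : α ≤ 1) {μ : ℝ} (hμ : 0 ≤ μ) :
    ∑' l : ℕ, ENNReal.ofReal ((2 * (l : ℝ) + 1) ^ (1 + 2 * α) * (2 * π ^ 2 * besselInt l μ))
      ≤ ENNReal.ofReal (108 * π ^ 2 * exp 16 * exp (μ ^ 2 / 4)) := by
  have hsum : Summable fun l : ℕ ↦ 108 * π ^ 2 * exp (2 * μ) * (μ ^ l / l !) ^ 2 :=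
    (summable_sq_pow_div_factorial μ).mul_left _
  calc ∑' l : ℕ, ENNReal.ofReal ((2 * (l : ℝ) + 1) ^ (1 + 2 * α) * (2 * π ^ 2 * besselInt l μ))
      ≤ ∑' l : ℕ, ENNReal.ofReal (108 * π ^ 2 * exp (2 * μ) * (μ ^ l / l !) ^ 2) :=
        ENNReal.tsum_le_tsum fun l ↦ ENNReal.ofReal_le_ofReal (rpow_mul_besselInt_le hα l hμ)
    _ = ENNReal.ofReal (∑' l : ℕ, 108 * π ^ 2 * exp (2 * μ) * (μ ^ l / l !) ^ 2) :=
        (ENNReal.ofReal_tsum_of_nonneg (fun l ↦ by positivity) hsum).symm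
    _ ≤ ENNReal.ofReal (108 * π ^ 2 * exp 16 * exp (μ ^ 2 / 4)) := by
        gcongr
        calc ∑' l : ℕ, 108 * π ^ 2 * exp (2 * μ) * (μ ^ l / l !) ^ 2
            ≤ 108 * π ^ 2 * exp (2 * μ) * exp (2 * μ) := by
              rw [tsum_mul_left]
              gcongr
              exact tsum_sq_pow_div_factorial_le hμ
          _ ≤ 108 * π ^ 2 * exp 16 * exp (μ ^ 2 / 4) := by
              rw [mul_assoc, mul_assoc _ (exp 16), ← exp_add, ← exp_add]
              have hexponent : 2 * μ + 2 * μ ≤ 16 + μ ^ 2 / 4 := by nlinarith [sq_nonneg (μ - 8)]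
              exact mul_le_mul_of_nonneg_left (exp_le_exp.mpr hexponent) (by positivity)

/-- There is an absolute constant `C > 0` such that for all `c, D > 0`,
`α ∈ (0,1]` and every finite Borel measure `G` on `[0,∞)`,
`Σ (2l+1)^{1+2α} C_l ≤ C ∫ e^{μ²/4} G(dμ)` (in `ℝ≥0∞`, so in particular the series
converges whenever the integral is finite). -/
theorem spectrum_sum_le_exp_integral :
    ∃ C : ℝ, 0 < C ∧
      ∀ c D α : ℝ, 0 < c → 0 < D → 0 < α → α ≤ 1 →
        ∀ G : MeasureTheory.Measure ℝ, MeasureTheory.IsFiniteMeasure G →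
          G (Set.Iio 0) = 0 →
          ∑' l : ℕ, ENNReal.ofReal ((2 * (l : ℝ) + 1) ^ (1 + 2 * α) * Cl0 G l)
            ≤ ENNReal.ofReal C *
              ∫⁻ μ in Set.Ici (0 : ℝ), ENNReal.ofReal (Real.exp (μ ^ 2 / 4)) ∂G := by
  refine ⟨108 * π ^ 2 * exp 16, by positivity, fun c D α _ _ _ hα G _ _ ↦ ?_⟩
  calc ∑' l : ℕ, ENNReal.ofReal ((2 * (l : ℝ) + 1) ^ (1 + 2 * α) * Cl0 G l)
      ≤ ∑' l : ℕ, ∫⁻ μ in Ici 0,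
          ENNReal.ofReal ((2 * (l : ℝ) + 1) ^ (1 + 2 * α) * (2 * π ^ 2 * besselInt l μ)) ∂G :=
        ENNReal.tsum_le_tsum fun l ↦ by
          rw [Cl0, ← integral_const_mul, ← integral_const_mul]
          exact ofReal_integral_le_lintegral_ofReal _
    _ ≤ ∫⁻ μ in Ici 0, ∑' l : ℕ,
          ENNReal.ofReal ((2 * (l : ℝ) + 1) ^ (1 + 2 * α) * (2 * π ^ 2 * besselInt l μ)) ∂G :=
        tsum_lintegral_le_lintegral_tsum _
    _ ≤ ∫⁻ μ in Ici 0, ENNReal.ofReal (108 * π ^ 2 * exp 16 * exp (μ ^ 2 / 4)) ∂G :=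
        setLIntegral_mono' measurableSet_Ici fun μ hμ ↦ tsum_ofReal_rpow_mul_besselInt_le hα hμ
    _ = ENNReal.ofReal (108 * π ^ 2 * exp 16) *
          ∫⁻ μ in Ici 0, ENNReal.ofReal (exp (μ ^ 2 / 4)) ∂G := by
        rw [← lintegral_const_mul' _ _ ENNReal.ofReal_ne_top]
        simp_rw [ENNReal.ofReal_mul (by positivity : (0 : ℝ) ≤ 108 * π ^ 2 * exp 16)]
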